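/- arXiv:0908.0302 — 4 statements merged into one kernel-verified Lean document; each statement's English description precedes it below -/
import Mathlib

section
/- Randomized transform squares Z: Let X be a finite set with a group operation +, |X| = q, and W : X → Y a channel. Define W⁺(y₁,y₂,u₁,π | u₂) = (1/(q·q!))·W(y₁ | u₁+u₂)·W(y₂ | π(u₂)), where π ranges over all permutations of X. Then Z(W⁺) = Z(W)², where Z is the average Bhattacharyya parameter. -/
open Finset

/-- Average Bhattacharyya parameter of a channel. -/
noncomputable def Zavg {A B : Type*} [Fintype A] [Fintype B] [DecidableEq A]
    (V : A → B → ℝ) : ℝ :=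
  ((Fintype.card A : ℝ) * ((Fintype.card A : ℝ) - 1))⁻¹ *
    ∑ a, ∑ a' ∈ univ.filter (· ≠ a), ∑ b, Real.sqrt (V a b * V a' b)

/-- Randomized "plus" transform: the permutation `π` is chosen uniformly at random
and revealed to the receiver:
`W⁺(y₁,y₂,u₁,π | u₂) = (1/(q·q!)) W(y₁|u₁+u₂) W(y₂|π(u₂))`. -/
noncomputable def WplusPerm {X Y : Type*} [Fintype X] [DecidableEq X] [AddGroup X]
    (W : X → Y → ℝ) : X → Y × Y × X × Equiv.Perm X → ℝ :=
  fun u2 p =>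
    ((Fintype.card X : ℝ) * (Fintype.card (Equiv.Perm X) : ℝ))⁻¹ *
      W (p.2.2.1 + u2) p.1 * W (p.2.2.2 u2) p.2.1

lemma perm_sum_const {X : Type*} [Fintype X] [DecidableEq X] (g : X → X → ℝ)
    {u u' v v' : X} (h1 : u ≠ u') (h2 : v ≠ v') :
    ∑ π : Equiv.Perm X, g (π u) (π u') = ∑ π : Equiv.Perm X, g (π v) (π v') := by
  set σ1 := Equiv.swap u v with hσ1
  have hσ1v : σ1 v = u := Equiv.swap_apply_right u v
  set t := σ1 v' with ht
  have htu : t ≠ u := by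
    rw [ht, ← hσ1v]
    exact fun h => h2 ((σ1.injective h).symm)
  set σ2 := Equiv.swap t u' with hσ2
  set σ : Equiv.Perm X := σ2 * σ1 with hσ
  have hσv : σ v = u := by
    rw [hσ, Equiv.Perm.mul_apply, hσ1v, hσ2]
    exact Equiv.swap_apply_of_ne_of_ne htu.symm h1
  have hσv' : σ v' = u' := by
    rw [hσ, Equiv.Perm.mul_apply, ← ht, hσ2, Equiv.swap_apply_left]
  refine Fintype.sum_equiv (Equiv.mulRight σ) _ _ (fun π => ?_)
  simp [Equiv.Perm.mul_apply, hσv, hσv']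

/-- The randomized transform squares the average Bhattacharyya parameter:
`Z(W⁺) = Z(W)²`. -/
theorem Zavg_WplusPerm_eq_sq {X Y : Type*} [Fintype X] [DecidableEq X] [AddGroup X]
    [Fintype Y] (W : X → Y → ℝ) (hq : 2 ≤ Fintype.card X)
    (hnn : ∀ x y, 0 ≤ W x y) (hsum : ∀ x, ∑ y, W x y = 1) :
    Zavg (WplusPerm W) = Zavg W ^ 2 := by
  classical
  obtain ⟨x0, x1, hx01⟩ := Fintype.exists_pair_of_one_lt_card (α := X) (by omega)
  set q : ℝ := (Fintype.card X : ℝ) with hqdef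
  set N : ℝ := (Fintype.card (Equiv.Perm X) : ℝ) with hNdef
  have hq0 : (0:ℝ) < q := by rw [hqdef]; exact_mod_cast lt_of_lt_of_le (by norm_num) hq
  have hq1 : (0:ℝ) < q - 1 := by
    rw [hqdef]
    have : (2:ℝ) ≤ (Fintype.card X : ℝ) := by exact_mod_cast hq
    linarith
  have hN0 : (0:ℝ) < N := by rw [hNdef]; exact_mod_cast Fintype.card_pos
  set k : ℝ := (q * N)⁻¹ with hk
  have hk0 : 0 ≤ k := by positivity
  set B : X → X → ℝ := fun a b => ∑ y, Real.sqrt (W a y * W b y) with hB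
  set S : ℝ := ∑ a : X, ∑ a' : X, (if a' ≠ a then B a a' else 0) with hS
  have hZW : Zavg W = (q * (q - 1))⁻¹ * S := by
    rw [Zavg, hS]
    congr 1
    exact Finset.sum_congr rfl fun a _ => Finset.sum_filter _ _
  set c0 : ℝ := ∑ π : Equiv.Perm X, B (π x0) (π x1) with hc0
  have key1 : ∀ u v : X, u ≠ v → (∑ π : Equiv.Perm X, B (π u) (π v)) = c0 :=
    fun u v huv => perm_sum_const B huv hx01
  have count : ∀ u : X, (∑ v : X, (if v ≠ u then (1:ℝ) else 0)) = q - 1 := by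
    intro u
    rw [Finset.sum_boole, Finset.filter_ne', Finset.card_erase_of_mem (mem_univ u),
      Finset.card_univ, hqdef, Nat.cast_sub (by omega)]
    norm_num
  have reidx : ∀ π : Equiv.Perm X,
      (∑ u : X, ∑ v : X, (if v ≠ u then B (π u) (π v) else 0)) = S := by
    intro π
    rw [hS]
    refine Fintype.sum_equiv π _ _ (fun u => ?_)
    refine Fintype.sum_equiv π _ _ (fun v => ?_)
    simp [EmbeddingLike.apply_eq_iff_eq]
  have key2 : q * (q - 1) * c0 = N * S := by
    have h1 : (∑ u : X, ∑ v : X, (if v ≠ u then c0 else 0)) = q * ((q - 1) * c0) := by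
      have hptw : ∀ u : X, (∑ v : X, (if v ≠ u then c0 else 0)) = (q - 1) * c0 := by
        intro u
        rw [← count u, Finset.sum_mul]
        exact Finset.sum_congr rfl fun v _ => by split_ifs <;> simp
      rw [Finset.sum_congr rfl fun u _ => hptw u, Finset.sum_const, Finset.card_univ,
        nsmul_eq_mul, ← hqdef]
    have h2 : (∑ u : X, ∑ v : X, (if v ≠ u then c0 else 0)) = N * S := by
      have step : ∀ u v : X, (if v ≠ u then c0 else 0)
          = ∑ π : Equiv.Perm X, (if v ≠ u then B (π u) (π v) else 0) := by
        intro u v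
        split_ifs with h
        · rw [← key1 u v (Ne.symm h)]
        · simp
      rw [Finset.sum_congr rfl fun u _ => Finset.sum_congr rfl fun v _ => step u v]
      rw [show (∑ u : X, ∑ v : X, ∑ π : Equiv.Perm X, (if v ≠ u then B (π u) (π v) else 0))
          = ∑ π : Equiv.Perm X, ∑ u : X, ∑ v : X, (if v ≠ u then B (π u) (π v) else 0) by
        rw [show (∑ u : X, ∑ v : X, ∑ π : Equiv.Perm X, (if v ≠ u then B (π u) (π v) else 0))
            = ∑ u : X, ∑ π : Equiv.Perm X, ∑ v : X, (if v ≠ u then B (π u) (π v) else 0) from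
          Finset.sum_congr rfl fun _ _ => Finset.sum_comm]
        exact Finset.sum_comm]
      rw [Finset.sum_congr rfl fun π _ => reidx π, Finset.sum_const, Finset.card_univ,
        nsmul_eq_mul, ← hNdef]
    rw [mul_assoc, ← h1]
    exact h2
  have reidx2 : ∀ u1 : X,
      (∑ u2 : X, ∑ v2 : X, (if v2 ≠ u2 then B (u1 + u2) (u1 + v2) else 0)) = S := by
    intro u1
    rw [hS]
    refine Fintype.sum_equiv (Equiv.addLeft u1) _ _ (fun u2 => ?_)
    refine Fintype.sum_equiv (Equiv.addLeft u1) _ _ (fun v2 => ?_)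
    simp
  have hsqrt : ∀ (u v : X) (p : Y × Y × X × Equiv.Perm X),
      Real.sqrt (WplusPerm W u p * WplusPerm W v p)
        = k * Real.sqrt (W (p.2.2.1 + u) p.1 * W (p.2.2.1 + v) p.1)
            * Real.sqrt (W (p.2.2.2 u) p.2.1 * W (p.2.2.2 v) p.2.1) := by
    intro u v p
    have hunfold : ∀ w : X, WplusPerm W w p = k * W (p.2.2.1 + w) p.1 * W (p.2.2.2 w) p.2.1 := by
      intro w; rw [WplusPerm, hk, hqdef, hNdef]
    rw [hunfold, hunfold]
    rw [show (k * W (p.2.2.1 + u) p.1 * W (p.2.2.2 u) p.2.1)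
          * (k * W (p.2.2.1 + v) p.1 * W (p.2.2.2 v) p.2.1)
        = (k * k) * ((W (p.2.2.1 + u) p.1 * W (p.2.2.1 + v) p.1)
          * (W (p.2.2.2 u) p.2.1 * W (p.2.2.2 v) p.2.1)) by ring]
    rw [Real.sqrt_mul (mul_nonneg hk0 hk0)
        ((W (p.2.2.1 + u) p.1 * W (p.2.2.1 + v) p.1)
          * (W (p.2.2.2 u) p.2.1 * W (p.2.2.2 v) p.2.1)),
      Real.sqrt_mul (mul_nonneg (hnn _ _) (hnn _ _)) (W (p.2.2.2 u) p.2.1 * W (p.2.2.2 v) p.2.1),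
      Real.sqrt_mul_self hk0]
    ring
  have inner : ∀ u2 v2 : X,
      (∑ p : Y × Y × X × Equiv.Perm X, Real.sqrt (WplusPerm W u2 p * WplusPerm W v2 p))
        = k * (∑ u1 : X, B (u1 + u2) (u1 + v2)) * (∑ π : Equiv.Perm X, B (π u2) (π v2)) := by
    intro u2 v2
    rw [Finset.sum_congr rfl fun p _ => hsqrt u2 v2 p]
    simp only [Fintype.sum_prod_type, hB]
    simp only [← Finset.mul_sum, ← Finset.sum_mul]
    rw [show (∑ i : Y, ∑ j : X, Real.sqrt (W (j + u2) i * W (j + v2) i))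
          = ∑ x : X, ∑ y : Y, Real.sqrt (W (x + u2) y * W (x + v2) y) from Finset.sum_comm,
      show (∑ i : Y, ∑ j : Equiv.Perm X, Real.sqrt (W (j u2) i * W (j v2) i))
          = ∑ x : Equiv.Perm X, ∑ y : Y, Real.sqrt (W (x u2) y * W (x v2) y) from
        Finset.sum_comm]
  have main : (∑ u2 : X, ∑ v2 ∈ univ.filter (· ≠ u2), ∑ p : Y × Y × X × Equiv.Perm X,
      Real.sqrt (WplusPerm W u2 p * WplusPerm W v2 p)) = k * c0 * (q * S) := by
    rw [Finset.sum_congr rfl fun u2 _ => Finset.sum_filter _ _]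
    have step : ∀ u2 v2 : X,
        (if v2 ≠ u2 then (∑ p : Y × Y × X × Equiv.Perm X,
            Real.sqrt (WplusPerm W u2 p * WplusPerm W v2 p)) else 0)
          = k * c0 * (if v2 ≠ u2 then (∑ u1 : X, B (u1 + u2) (u1 + v2)) else 0) := by
      intro u2 v2
      split_ifs with h
      · rw [inner u2 v2, key1 u2 v2 (Ne.symm h)]; ring
      · simp
    rw [Finset.sum_congr rfl fun u2 _ => Finset.sum_congr rfl fun v2 _ => step u2 v2]
    simp only [← Finset.mul_sum]
    congr 1
    have push : ∀ u2 v2 : X, (if v2 ≠ u2 then (∑ u1 : X, B (u1 + u2) (u1 + v2)) else 0)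
        = ∑ u1 : X, (if v2 ≠ u2 then B (u1 + u2) (u1 + v2) else 0) := by
      intro u2 v2; split_ifs with h <;> simp
    rw [Finset.sum_congr rfl fun u2 _ => Finset.sum_congr rfl fun v2 _ => push u2 v2]
    rw [show (∑ u2 : X, ∑ v2 : X, ∑ u1 : X, (if v2 ≠ u2 then B (u1 + u2) (u1 + v2) else 0))
        = ∑ u1 : X, ∑ u2 : X, ∑ v2 : X, (if v2 ≠ u2 then B (u1 + u2) (u1 + v2) else 0) by
      rw [show (∑ u2 : X, ∑ v2 : X, ∑ u1 : X, (if v2 ≠ u2 then B (u1 + u2) (u1 + v2) else 0))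
          = ∑ u2 : X, ∑ u1 : X, ∑ v2 : X, (if v2 ≠ u2 then B (u1 + u2) (u1 + v2) else 0) from
        Finset.sum_congr rfl fun _ _ => Finset.sum_comm]
      exact Finset.sum_comm]
    rw [Finset.sum_congr rfl fun u1 _ => reidx2 u1, Finset.sum_const, Finset.card_univ,
      nsmul_eq_mul, ← hqdef]
  rw [Zavg, main, hZW]
  have hc0' : c0 = N * S / (q * (q - 1)) := by
    rw [eq_div_iff (by positivity)]
    linarith [key2]
  rw [hc0', hk, ← hqdef]
  field_simp
end

section
/- Field-multiplier transform squares Z: Let X be a finite field with q elements and W : X → Y a channel. Define W⁺(y₁,y₂,u₁,r | u₂) = (1/(q(q−1)))·W(y₁ | u₁+u₂)·W(y₂ | r·u₂) for r ranging over nonzero elements of X. Then Z(W⁺) = Z(W)². -/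
open Finset

set_option linter.unusedSectionVars false
set_option linter.unusedVariables false

private lemma sqrt4 (c a b a' b' : ℝ) (hc : 0 ≤ c) (ha : 0 ≤ a) (hb : 0 ≤ b)
    (ha' : 0 ≤ a') (hb' : 0 ≤ b') :
    Real.sqrt ((c * a * b) * (c * a' * b')) =
      c * Real.sqrt (a * a') * Real.sqrt (b * b') := by
  rw [show (c * a * b) * (c * a' * b')
      = (c * Real.sqrt (a * a') * Real.sqrt (b * b')) ^ 2 by
    rw [mul_pow, mul_pow, Real.sq_sqrt (by positivity), Real.sq_sqrt (by positivity)]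
    ring]
  exact Real.sqrt_sq (by positivity)

section reindex
variable {X : Type*} [Field X] [Fintype X] [DecidableEq X]

private lemma sum_shift (f : X → X → ℝ) (u2 u2' : X) :
    ∑ u1, f (u1 + u2) (u1 + u2') = ∑ a, f a (a - (u2 - u2')) := by
  apply Fintype.sum_equiv (Equiv.addRight u2)
  intro u1
  simp only [Equiv.coe_addRight]
  congr 1
  ring

private lemma filter_ne_reindex (a : X) (f : X → ℝ) :
    ∑ a' ∈ univ.filter (· ≠ a), f a' = ∑ d ∈ univ.filter (· ≠ (0:X)), f (a - d) := by
  apply Finset.sum_nbij' (fun a' => a - a') (fun d => a - d)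
  · intro x hx; simp at hx ⊢; intro h; apply hx; linear_combination -h
  · intro x hx; simp at hx ⊢; intro h; apply hx; linear_combination h
  · intro x _; ring
  · intro x _; ring
  · intro x _; congr 1; ring

private lemma mul_right_reindex (d : X) (hd : d ≠ 0) (f : X → ℝ) :
    ∑ r ∈ univ.filter (· ≠ (0:X)), f (r * d) = ∑ e ∈ univ.filter (· ≠ (0:X)), f e := by
  apply Finset.sum_nbij' (fun r => r * d) (fun e => e * d⁻¹)
  · intro x hx; simp only [mem_filter, mem_univ, true_and] at hx ⊢; exact mul_ne_zero hx hd
  · intro x hx; simp only [mem_filter, mem_univ, true_and] at hx ⊢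
    exact mul_ne_zero hx (inv_ne_zero hd)
  · intro x _; field_simp
  · intro x _; field_simp
  · intro x _; rfl

private lemma mul_left_reindex (r : X) (hr : r ≠ 0) (f : X → ℝ) :
    ∑ u, f (r * u) = ∑ a, f a := by
  apply Fintype.sum_equiv (Equiv.mulLeft₀ r hr)
  intro u; rfl

end reindex

/-- Field-multiplier randomized "plus" transform: a uniformly random nonzero field
element `r` multiplies the second input and is revealed to the receiver:
`W⁺(y₁,y₂,u₁,r | u₂) = (1/(q(q-1))) W(y₁|u₁+u₂) W(y₂|r·u₂)`. -/
noncomputable def WplusField {X Y : Type*} [Field X] [Fintype X] [DecidableEq X]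
    (W : X → Y → ℝ) : X → Y × Y × X × {r : X // r ≠ 0} → ℝ :=
  fun u2 p =>
    ((Fintype.card X : ℝ) * ((Fintype.card X : ℝ) - 1))⁻¹ *
      W (p.2.2.1 + u2) p.1 * W ((p.2.2.2 : X) * u2) p.2.1

/-- The field-multiplier transform squares the average Bhattacharyya parameter:
`Z(W⁺) = Z(W)²`. -/
theorem Zavg_WplusField_eq_sq {X Y : Type*} [Field X] [Fintype X] [DecidableEq X]
    [Fintype Y] (W : X → Y → ℝ)
    (hnn : ∀ x y, 0 ≤ W x y) (hsum : ∀ x, ∑ y, W x y = 1) :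
    Zavg (WplusField W) = Zavg W ^ 2 := by
  classical
  set c : ℝ := ((Fintype.card X : ℝ) * ((Fintype.card X : ℝ) - 1))⁻¹ with hcdef
  have hq : (2:ℝ) ≤ (Fintype.card X : ℝ) := by exact_mod_cast Fintype.one_lt_card
  have hc : 0 ≤ c := by
    apply inv_nonneg.2; apply mul_nonneg <;> linarith
  set S : X → X → ℝ := fun a a' => ∑ y, Real.sqrt (W a y * W a' y) with hSdef
  set F : X → ℝ := fun d => ∑ a, S a (a - d) with hFdef
  set T : ℝ := ∑ d ∈ univ.filter (· ≠ (0:X)), F d with hTdef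
  -- Zavg W = c * T
  have hZW : Zavg W = c * T := by
    rw [Zavg]
    congr 1
    rw [hTdef]
    rw [show (∑ a : X, ∑ a' ∈ univ.filter (· ≠ a), ∑ b, Real.sqrt (W a b * W a' b))
        = ∑ a : X, ∑ d ∈ univ.filter (· ≠ (0:X)), S a (a - d) from
      Finset.sum_congr rfl fun a _ => filter_ne_reindex a (fun a' => S a a')]
    rw [Finset.sum_comm]
  -- inner sum factorization
  have hinner : ∀ u2 u2' : X,
      (∑ b : Y × Y × X × {r : X // r ≠ 0},
        Real.sqrt (WplusField W u2 b * WplusField W u2' b))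
      = c * (∑ u1, S (u1 + u2) (u1 + u2'))
          * (∑ r ∈ univ.filter (· ≠ (0:X)), S (r * u2) (r * u2')) := by
    intro u2 u2'
    calc (∑ b : Y × Y × X × {r : X // r ≠ 0},
          Real.sqrt (WplusField W u2 b * WplusField W u2' b))
        = ∑ y1 : Y, ∑ y2 : Y, ∑ u1 : X, ∑ r : {r : X // r ≠ 0},
            c * Real.sqrt (W (u1 + u2) y1 * W (u1 + u2') y1)
              * Real.sqrt (W ((r : X) * u2) y2 * W ((r : X) * u2') y2) := by
          simp only [Fintype.sum_prod_type]
          refine Finset.sum_congr rfl fun y1 _ => Finset.sum_congr rfl fun y2 _ =>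
            Finset.sum_congr rfl fun u1 _ => Finset.sum_congr rfl fun r _ => ?_
          exact sqrt4 c _ _ _ _ hc (hnn _ _) (hnn _ _) (hnn _ _) (hnn _ _)
      _ = c * (∑ y1 : Y, ∑ u1 : X, Real.sqrt (W (u1 + u2) y1 * W (u1 + u2') y1))
            * (∑ y2 : Y, ∑ r : {r : X // r ≠ 0},
                Real.sqrt (W ((r : X) * u2) y2 * W ((r : X) * u2') y2)) := by
          simp only [← Finset.mul_sum, ← Finset.sum_mul]
      _ = c * (∑ u1, S (u1 + u2) (u1 + u2'))
            * (∑ r ∈ univ.filter (· ≠ (0:X)), S (r * u2) (r * u2')) := by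
          rw [Finset.sum_comm (f := fun y1 u1 =>
            Real.sqrt (W (u1 + u2) y1 * W (u1 + u2') y1))]
          rw [Finset.sum_comm (f := fun y2 (r : {r : X // r ≠ 0}) =>
            Real.sqrt (W ((r : X) * u2) y2 * W ((r : X) * u2') y2))]
          rw [show (∑ r ∈ univ.filter (· ≠ (0:X)), S (r * u2) (r * u2'))
              = ∑ r : {r : X // r ≠ 0}, S ((r : X) * u2) ((r : X) * u2') from
            Finset.sum_subtype _ (fun x => by simp) _]
  -- main computation
  rw [Zavg, ← hcdef]
  calc c * ∑ u2 : X, ∑ u2' ∈ univ.filter (· ≠ u2), ∑ b,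
          Real.sqrt (WplusField W u2 b * WplusField W u2' b)
      = c * ∑ u2 : X, ∑ d ∈ univ.filter (· ≠ (0:X)),
          c * F d * (∑ r ∈ univ.filter (· ≠ (0:X)), S (r * u2) (r * (u2 - d))) := by
        congr 1
        refine Finset.sum_congr rfl fun u2 _ => ?_
        rw [filter_ne_reindex u2 (fun u2' => ∑ b,
          Real.sqrt (WplusField W u2 b * WplusField W u2' b))]
        refine Finset.sum_congr rfl fun d hd => ?_
        rw [hinner u2 (u2 - d), sum_shift (fun a a' => S a a') u2 (u2 - d)]
        rw [show u2 - (u2 - d) = d by ring]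
    _ = c * ∑ d ∈ univ.filter (· ≠ (0:X)), c * F d * T := by
        congr 1
        rw [Finset.sum_comm]
        refine Finset.sum_congr rfl fun d hd => ?_
        have hd0 : d ≠ 0 := by simpa using hd
        rw [← Finset.mul_sum]
        congr 1
        calc ∑ u2 : X, ∑ r ∈ univ.filter (· ≠ (0:X)), S (r * u2) (r * (u2 - d))
            = ∑ r ∈ univ.filter (· ≠ (0:X)), ∑ u2 : X, S (r * u2) (r * u2 - r * d) := by
              rw [Finset.sum_comm]
              exact Finset.sum_congr rfl fun r _ => Finset.sum_congr rfl fun u2 _ => by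
                rw [mul_sub]
          _ = ∑ r ∈ univ.filter (· ≠ (0:X)), F (r * d) := by
              refine Finset.sum_congr rfl fun r hr => ?_
              have hr0 : r ≠ 0 := by simpa using hr
              exact mul_left_reindex r hr0 (fun b => S b (b - r * d))
          _ = T := mul_right_reindex d hd0 F
    _ = Zavg W ^ 2 := by
        rw [← Finset.sum_mul, ← Finset.mul_sum, hZW, ← hTdef]
        ring
end

section
/- For any permutation π of X, the channel W^(π)(y₁,y₂ | u₁) = (1/q) Σ_{u₂} W(y₁ | u₁+u₂) W(y₂ | π(u₂)) satisfies Z(W^(π)) ≤ min{ q·Z(W), 2·Z(W) + (q−1)·Z(W)² }. -/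
open Finset

/-- The "minus" channel with a fixed permutation `π`:
`W^(π)(y₁,y₂ | u₁) = (1/q) ∑_{u₂} W(y₁|u₁+u₂) W(y₂|π(u₂))`. -/
noncomputable def Wpi {X Y : Type*} [Fintype X] [AddGroup X]
    (W : X → Y → ℝ) (π : Equiv.Perm X) : X → Y × Y → ℝ :=
  fun u1 p => (Fintype.card X : ℝ)⁻¹ * ∑ u2, W (u1 + u2) p.1 * W (π u2) p.2

/- ### Auxiliary lemmas -/

lemma sqrt_sum_le_sum_sqrt' {ι : Type*} (s : Finset ι) (f : ι → ℝ)
    (h : ∀ i ∈ s, 0 ≤ f i) :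
    Real.sqrt (∑ i ∈ s, f i) ≤ ∑ i ∈ s, Real.sqrt (f i) := by
  have h1 : ∑ i ∈ s, f i ≤ (∑ i ∈ s, Real.sqrt (f i)) ^ 2 := by
    induction s using Finset.cons_induction with
    | empty => simp
    | cons a s ha ih =>
      rw [Finset.sum_cons, Finset.sum_cons]
      have hfa : 0 ≤ f a := h a (Finset.mem_cons_self a s)
      have ih' := ih fun i hi => h i (Finset.mem_cons.2 (Or.inr hi))
      have hs : 0 ≤ ∑ i ∈ s, Real.sqrt (f i) :=
        Finset.sum_nonneg fun i _ => Real.sqrt_nonneg _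
      nlinarith [Real.sq_sqrt hfa, Real.sqrt_nonneg (f a)]
  calc Real.sqrt (∑ i ∈ s, f i) ≤ Real.sqrt ((∑ i ∈ s, Real.sqrt (f i)) ^ 2) :=
        Real.sqrt_le_sqrt h1
    _ = _ := Real.sqrt_sq (Finset.sum_nonneg fun i _ => Real.sqrt_nonneg _)

lemma sum4_comm {α : Type*} [Fintype α] (f : α → α → α → α → ℝ) :
    (∑ a : α, ∑ b : α, ∑ c : α, ∑ d : α, f a b c d)
      = ∑ c : α, ∑ d : α, ∑ a : α, ∑ b : α, f a b c d := by
  calc (∑ a : α, ∑ b : α, ∑ c : α, ∑ d : α, f a b c d)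
      = ∑ a : α, ∑ c : α, ∑ b : α, ∑ d : α, f a b c d :=
        Finset.sum_congr rfl fun a _ => Finset.sum_comm
    _ = ∑ a : α, ∑ c : α, ∑ d : α, ∑ b : α, f a b c d :=
        Finset.sum_congr rfl fun a _ => Finset.sum_congr rfl fun c _ => Finset.sum_comm
    _ = ∑ c : α, ∑ a : α, ∑ d : α, ∑ b : α, f a b c d := Finset.sum_comm
    _ = ∑ c : α, ∑ d : α, ∑ a : α, ∑ b : α, f a b c d :=
        Finset.sum_congr rfl fun c _ => Finset.sum_comm

lemma mul_sum2 {α : Type*} [Fintype α] (r : ℝ) (f : α → α → ℝ) :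
    (∑ a : α, ∑ b : α, r * f a b) = r * ∑ a : α, ∑ b : α, f a b := by
  rw [Finset.mul_sum]
  exact Finset.sum_congr rfl fun a _ => (Finset.mul_sum _ _ _).symm

/-- Bhattacharyya sum between two inputs. -/
noncomputable def SB {X Y : Type*} [Fintype Y] (W : X → Y → ℝ) (x x' : X) : ℝ :=
  ∑ y, Real.sqrt (W x y * W x' y)

section SBlemmas

variable {X Y : Type*} [Fintype Y] {W : X → Y → ℝ}

lemma SB_nonneg (W : X → Y → ℝ) (x x' : X) : 0 ≤ SB W x x' :=
  Finset.sum_nonneg fun _ _ => Real.sqrt_nonneg _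

lemma SB_self (hnn : ∀ x y, 0 ≤ W x y) (hsum : ∀ x, ∑ y, W x y = 1) (x : X) :
    SB W x x = 1 := by
  rw [SB, ← hsum x]
  exact Finset.sum_congr rfl fun y _ => Real.sqrt_mul_self (hnn x y)

lemma SB_le_one (hnn : ∀ x y, 0 ≤ W x y) (hsum : ∀ x, ∑ y, W x y = 1) (x x' : X) :
    SB W x x' ≤ 1 := by
  have h2 : (SB W x x') ^ 2 ≤ 1 := by
    have := Finset.sum_sq_le_sum_mul_sum_of_sq_eq_mul (univ : Finset Y)
      (r := fun y => Real.sqrt (W x y * W x' y)) (f := W x) (g := W x')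
      (fun y _ => hnn x y) (fun y _ => hnn x' y)
      (fun y _ => Real.sq_sqrt (mul_nonneg (hnn x y) (hnn x' y)))
    rw [hsum x, hsum x', one_mul] at this
    exact this
  nlinarith [SB_nonneg W x x']

end SBlemmas

/-- `Z(W^(π)) ≤ min { q Z(W), 2 Z(W) + (q-1) Z(W)² }` for every permutation `π`. -/
theorem Zavg_Wpi_le {X Y : Type*} [Fintype X] [DecidableEq X] [AddGroup X] [Fintype Y]
    (W : X → Y → ℝ) (hq : 2 ≤ Fintype.card X)
    (hnn : ∀ x y, 0 ≤ W x y) (hsum : ∀ x, ∑ y, W x y = 1) (π : Equiv.Perm X) :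
    Zavg (Wpi W π) ≤
      min ((Fintype.card X : ℝ) * Zavg W)
        (2 * Zavg W + ((Fintype.card X : ℝ) - 1) * Zavg W ^ 2) := by
  classical
  have hq2 : (2:ℝ) ≤ (Fintype.card X : ℝ) := by exact_mod_cast hq
  set q : ℝ := (Fintype.card X : ℝ) with hqdef
  have hq0 : (0:ℝ) < q := by linarith
  have hq1 : (0:ℝ) < q - 1 := by linarith
  set S : X → X → ℝ := SB W with hSdef
  have hSnn : ∀ x x', 0 ≤ S x x' := fun x x' => SB_nonneg W x x'
  have hSd : ∀ x : X, S x x = 1 := SB_self hnn hsum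
  have hS1 : ∀ x x', S x x' ≤ 1 := SB_le_one hnn hsum
  set E : ℝ := ∑ a : X, ∑ b : X, S a b with hE
  have hcard : (∑ _x : X, (1:ℝ)) = q := by
    rw [Finset.sum_const, Finset.card_univ, nsmul_eq_mul, mul_one, hqdef]
  -- translation invariance helpers
  have hRleft : ∀ u : X, (∑ u2 : X, ∑ b : X, S (u + u2) b) = E := fun u =>
    Equiv.sum_comp (Equiv.addLeft u) (fun a => ∑ b : X, S a b)
  have hRright : ∀ u : X, (∑ u1 : X, ∑ b : X, S (u1 + u) b) = E := fun u =>
    Equiv.sum_comp (Equiv.addRight u) (fun a => ∑ b : X, S a b)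
  have hRow : ∀ x u : X, (∑ u2' : X, S x (u + u2')) = ∑ b : X, S x b := fun x u =>
    Equiv.sum_comp (Equiv.addLeft u) (fun b => S x b)
  have hRowR : ∀ x u : X, (∑ u1' : X, S x (u1' + u)) = ∑ b : X, S x b := fun x u =>
    Equiv.sum_comp (Equiv.addRight u) (fun b => S x b)
  have hpiRow : ∀ x : X, (∑ b : X, S x (π b)) = ∑ b : X, S x b := fun x =>
    Equiv.sum_comp π (fun b => S x b)
  have hpiCol : (∑ a : X, ∑ b : X, S (π a) b) = E :=
    Equiv.sum_comp π (fun a => ∑ b : X, S a b)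
  have hpiE : (∑ a : X, ∑ b : X, S (π a) (π b)) = E := by
    calc (∑ a : X, ∑ b : X, S (π a) (π b))
        = ∑ a : X, ∑ b : X, S (π a) b :=
          Finset.sum_congr rfl fun a _ => hpiRow (π a)
      _ = E := hpiCol
  -- sum with one term removed via an `if`
  have hif : ∀ (k : X) (g : X → ℝ),
      (∑ x : X, (if x = k then 0 else g x)) = (∑ x : X, g x) - g k := by
    intro k g
    have h1 : ∀ x : X, (if x = k then 0 else g x) = g x - (if x = k then g x else 0) := by
      intro x; split <;> simp
    rw [Finset.sum_congr rfl fun x _ => h1 x, Finset.sum_sub_distrib,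
      Finset.sum_ite_eq' univ k g, if_pos (mem_univ k)]
  -- the matrix `M`
  set M : ℝ := ∑ u1 : X, ∑ u1' ∈ univ.filter (· ≠ u1), ∑ u2 : X, ∑ u2' : X,
      S (u1 + u2) (u1' + u2') * S (π u2) (π u2') with hM
  -- step : the Bhattacharyya sum of `Wpi` is dominated by averages of products
  have step : ∀ u1 u1' : X,
      (∑ p : Y × Y, Real.sqrt (Wpi W π u1 p * Wpi W π u1' p))
        ≤ q⁻¹ * ∑ u2 : X, ∑ u2' : X, S (u1 + u2) (u1' + u2') * S (π u2) (π u2') := by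
    intro u1 u1'
    have point : ∀ p : Y × Y, Real.sqrt (Wpi W π u1 p * Wpi W π u1' p)
        ≤ q⁻¹ * ∑ u2 : X, ∑ u2' : X,
            Real.sqrt (W (u1 + u2) p.1 * W (π u2) p.2 *
              (W (u1' + u2') p.1 * W (π u2') p.2)) := by
      intro p
      have hprod : Wpi W π u1 p * Wpi W π u1' p
          = (q⁻¹ * q⁻¹) * ∑ u2 : X, ∑ u2' : X,
              (W (u1 + u2) p.1 * W (π u2) p.2 * (W (u1' + u2') p.1 * W (π u2') p.2)) := by
        simp only [Wpi, ← hqdef]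
        rw [mul_mul_mul_comm, Finset.sum_mul_sum]
      rw [hprod, Real.sqrt_mul (by positivity),
        Real.sqrt_mul_self (by positivity : (0:ℝ) ≤ q⁻¹)]
      refine mul_le_mul_of_nonneg_left ?_ (by positivity)
      calc Real.sqrt (∑ u2 : X, ∑ u2' : X,
            W (u1 + u2) p.1 * W (π u2) p.2 * (W (u1' + u2') p.1 * W (π u2') p.2))
          ≤ ∑ u2 : X, Real.sqrt (∑ u2' : X,
              W (u1 + u2) p.1 * W (π u2) p.2 * (W (u1' + u2') p.1 * W (π u2') p.2)) :=
            sqrt_sum_le_sum_sqrt' _ _ (fun u2 _ => Finset.sum_nonneg fun u2' _ =>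
              mul_nonneg (mul_nonneg (hnn _ _) (hnn _ _))
                (mul_nonneg (hnn _ _) (hnn _ _)))
        _ ≤ _ := Finset.sum_le_sum fun u2 _ => sqrt_sum_le_sum_sqrt' _ _
            (fun u2' _ => mul_nonneg (mul_nonneg (hnn _ _) (hnn _ _))
              (mul_nonneg (hnn _ _) (hnn _ _)))
    calc (∑ p : Y × Y, Real.sqrt (Wpi W π u1 p * Wpi W π u1' p))
        ≤ ∑ p : Y × Y, q⁻¹ * ∑ u2 : X, ∑ u2' : X,
            Real.sqrt (W (u1 + u2) p.1 * W (π u2) p.2 *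
              (W (u1' + u2') p.1 * W (π u2') p.2)) :=
          Finset.sum_le_sum fun p _ => point p
      _ = q⁻¹ * ∑ u2 : X, ∑ u2' : X, ∑ p : Y × Y,
            Real.sqrt (W (u1 + u2) p.1 * W (π u2) p.2 *
              (W (u1' + u2') p.1 * W (π u2') p.2)) := by
          rw [← Finset.mul_sum, Finset.sum_comm]
          congr 1
          exact Finset.sum_congr rfl fun u2 _ => Finset.sum_comm
      _ = q⁻¹ * ∑ u2 : X, ∑ u2' : X, S (u1 + u2) (u1' + u2') * S (π u2) (π u2') := by
          congr 1
          refine Finset.sum_congr rfl fun u2 _ => Finset.sum_congr rfl fun u2' _ => ?_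
          calc (∑ p : Y × Y, Real.sqrt (W (u1 + u2) p.1 * W (π u2) p.2 *
                (W (u1' + u2') p.1 * W (π u2') p.2)))
              = ∑ y1 : Y, ∑ y2 : Y,
                  Real.sqrt ((W (u1 + u2) y1 * W (u1' + u2') y1) *
                    (W (π u2) y2 * W (π u2') y2)) := by
                rw [Fintype.sum_prod_type]
                refine Finset.sum_congr rfl fun y1 _ => Finset.sum_congr rfl fun y2 _ => ?_
                congr 1
                ring
            _ = ∑ y1 : Y, ∑ y2 : Y, Real.sqrt (W (u1 + u2) y1 * W (u1' + u2') y1) *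
                  Real.sqrt (W (π u2) y2 * W (π u2') y2) :=
                Finset.sum_congr rfl fun y1 _ => Finset.sum_congr rfl fun y2 _ =>
                  Real.sqrt_mul (mul_nonneg (hnn _ _) (hnn _ _)) _
            _ = S (u1 + u2) (u1' + u2') * S (π u2) (π u2') :=
                (Finset.sum_mul_sum _ _ _ _).symm
  have hZWpiM : Zavg (Wpi W π) ≤ (q * (q - 1))⁻¹ * (q⁻¹ * M) := by
    have h1 : Zavg (Wpi W π) = (q * (q - 1))⁻¹ *
        ∑ u1 : X, ∑ u1' ∈ univ.filter (· ≠ u1),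
          ∑ p : Y × Y, Real.sqrt (Wpi W π u1 p * Wpi W π u1' p) := rfl
    rw [h1]
    refine mul_le_mul_of_nonneg_left ?_ (by positivity)
    rw [hM, Finset.mul_sum]
    refine Finset.sum_le_sum fun u1 _ => ?_
    rw [Finset.mul_sum]
    exact Finset.sum_le_sum fun u1' _ => step u1 u1'
  -- Zavg W in terms of E
  have hZW : (∑ a : X, ∑ b ∈ univ.filter (· ≠ a), S a b) = E - q := by
    have h1 : ∀ a : X, (∑ b ∈ univ.filter (· ≠ a), S a b) = (∑ b : X, S a b) - 1 := by
      intro a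
      rw [Finset.filter_ne', Finset.sum_erase_eq_sub (mem_univ a), hSd a]
    rw [Finset.sum_congr rfl fun a _ => h1 a, Finset.sum_sub_distrib, hcard]
  have hZavgW : Zavg W = (q * (q - 1))⁻¹ * (E - q) := by
    have h0 : Zavg W = (q * (q - 1))⁻¹ * ∑ a : X, ∑ b ∈ univ.filter (· ≠ a), S a b := rfl
    rw [h0, hZW]
  -- piece 2 (appears in both bounds)
  have hA : (∑ u1 : X, ∑ u1' ∈ univ.filter (· ≠ u1), ∑ u2 : X,
      S (π u2) (π (-u1' + (u1 + u2)))) = q * (E - q) := by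
    have h1 : ∀ u1 : X, (∑ u1' ∈ univ.filter (· ≠ u1), ∑ u2 : X,
        S (π u2) (π (-u1' + (u1 + u2))))
          = (∑ u1' : X, ∑ u2 : X, S (π u2) (π (-u1' + (u1 + u2)))) - q := by
      intro u1
      rw [Finset.filter_ne', Finset.sum_erase_eq_sub (mem_univ u1)]
      congr 1
      calc (∑ u2 : X, S (π u2) (π (-u1 + (u1 + u2)))) = ∑ _u2 : X, (1:ℝ) := by
            refine Finset.sum_congr rfl fun u2 _ => ?_
            rw [neg_add_cancel_left, hSd]
        _ = q := hcard
    have h2 : ∀ u1 : X, (∑ u1' : X, ∑ u2 : X, S (π u2) (π (-u1' + (u1 + u2)))) = E := by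
      intro u1
      rw [Finset.sum_comm]
      calc (∑ u2 : X, ∑ u1' : X, S (π u2) (π (-u1' + (u1 + u2))))
          = ∑ u2 : X, ∑ v : X, S (π u2) (π v) :=
            Finset.sum_congr rfl fun u2 _ =>
              Equiv.sum_comp ((Equiv.neg X).trans (Equiv.addRight (u1 + u2)))
                (fun v => S (π u2) (π v))
        _ = E := hpiE
    calc (∑ u1 : X, ∑ u1' ∈ univ.filter (· ≠ u1), ∑ u2 : X,
        S (π u2) (π (-u1' + (u1 + u2))))
        = ∑ _u1 : X, (E - q) := by
          refine Finset.sum_congr rfl fun u1 _ => ?_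
          rw [h1 u1, h2 u1]
      _ = q * (E - q) := by
          rw [Finset.sum_const, Finset.card_univ, nsmul_eq_mul, hqdef]
  -- bound 1 pointwise
  have key1 : ∀ u1 u1' u2 : X,
      (∑ u2' : X, S (u1 + u2) (u1' + u2') * S (π u2) (π u2'))
        ≤ S (π u2) (π (-u1' + (u1 + u2))) + ((∑ b : X, S (u1 + u2) b) - 1) := by
    intro u1 u1' u2
    set c : X := -u1' + (u1 + u2) with hc
    have hc' : u1' + c = u1 + u2 := add_neg_cancel_left u1' (u1 + u2)
    calc (∑ u2' : X, S (u1 + u2) (u1' + u2') * S (π u2) (π u2'))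
        = S (u1 + u2) (u1' + c) * S (π u2) (π c)
            + ∑ u2' ∈ univ.erase c, S (u1 + u2) (u1' + u2') * S (π u2) (π u2') :=
          (Finset.add_sum_erase _ _ (mem_univ c)).symm
      _ ≤ S (π u2) (π c) + ((∑ b : X, S (u1 + u2) b) - 1) := by
          have e1 : S (u1 + u2) (u1' + c) * S (π u2) (π c) = S (π u2) (π c) := by
            rw [hc', hSd, one_mul]
          have e2 : (∑ u2' ∈ univ.erase c, S (u1 + u2) (u1' + u2') * S (π u2) (π u2'))
              ≤ (∑ b : X, S (u1 + u2) b) - 1 := by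
            calc (∑ u2' ∈ univ.erase c, S (u1 + u2) (u1' + u2') * S (π u2) (π u2'))
                ≤ ∑ u2' ∈ univ.erase c, S (u1 + u2) (u1' + u2') :=
                  Finset.sum_le_sum fun u2' _ =>
                    mul_le_of_le_one_right (hSnn _ _) (hS1 _ _)
              _ = (∑ u2' : X, S (u1 + u2) (u1' + u2')) - S (u1 + u2) (u1' + c) :=
                  Finset.sum_erase_eq_sub (mem_univ c)
              _ = (∑ b : X, S (u1 + u2) b) - 1 := by
                  rw [hRow, hc', hSd]
          rw [e1]
          exact add_le_add le_rfl e2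
  have hM1 : M ≤ q ^ 2 * (E - q) := by
    have h1 : M ≤ ∑ u1 : X, ∑ u1' ∈ univ.filter (· ≠ u1), ∑ u2 : X,
        (S (π u2) (π (-u1' + (u1 + u2))) + ((∑ b : X, S (u1 + u2) b) - 1)) := by
      rw [hM]
      exact Finset.sum_le_sum fun u1 _ => Finset.sum_le_sum fun u1' _ =>
        Finset.sum_le_sum fun u2 _ => key1 u1 u1' u2
    have hsplit : ∀ u1 u1' : X, (∑ u2 : X,
        (S (π u2) (π (-u1' + (u1 + u2))) + ((∑ b : X, S (u1 + u2) b) - 1)))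
          = (∑ u2 : X, S (π u2) (π (-u1' + (u1 + u2)))) + (E - q) := by
      intro u1 u1'
      rw [Finset.sum_add_distrib, Finset.sum_sub_distrib, hRleft u1, hcard]
    have hcardf : ∀ u1 : X, (∑ _u1' ∈ univ.filter (· ≠ u1), (E - q))
        = (q - 1) * (E - q) := by
      intro u1
      rw [Finset.sum_const, Finset.filter_ne', Finset.card_erase_of_mem (mem_univ u1),
        Finset.card_univ, nsmul_eq_mul]
      congr 1
      rw [hqdef]
      push_cast [Nat.cast_sub (by omega : 1 ≤ Fintype.card X)]
      ring
    have h2 : (∑ u1 : X, ∑ u1' ∈ univ.filter (· ≠ u1), ∑ u2 : X,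
        (S (π u2) (π (-u1' + (u1 + u2))) + ((∑ b : X, S (u1 + u2) b) - 1)))
          = q * (E - q) + q * ((q - 1) * (E - q)) := by
      calc (∑ u1 : X, ∑ u1' ∈ univ.filter (· ≠ u1), ∑ u2 : X,
          (S (π u2) (π (-u1' + (u1 + u2))) + ((∑ b : X, S (u1 + u2) b) - 1)))
          = ∑ u1 : X, ((∑ u1' ∈ univ.filter (· ≠ u1),
              ∑ u2 : X, S (π u2) (π (-u1' + (u1 + u2)))) + (q - 1) * (E - q)) := by
            refine Finset.sum_congr rfl fun u1 _ => ?_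
            rw [Finset.sum_congr rfl fun u1' _ => hsplit u1 u1', Finset.sum_add_distrib,
              hcardf u1]
        _ = (∑ u1 : X, ∑ u1' ∈ univ.filter (· ≠ u1),
              ∑ u2 : X, S (π u2) (π (-u1' + (u1 + u2))))
            + ∑ _u1 : X, (q - 1) * (E - q) := Finset.sum_add_distrib
        _ = q * (E - q) + q * ((q - 1) * (E - q)) := by
            rw [hA, Finset.sum_const, Finset.card_univ, nsmul_eq_mul, hqdef]
    calc M ≤ q * (E - q) + q * ((q - 1) * (E - q)) := h1.trans (le_of_eq h2)
      _ = q ^ 2 * (E - q) := by ring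
  -- bound 2 pointwise
  have key2 : ∀ u1 u1' u2 : X,
      (∑ u2' : X, S (u1 + u2) (u1' + u2') * S (π u2) (π u2'))
        ≤ S (u1 + u2) (u1' + u2) + S (π u2) (π (-u1' + (u1 + u2)))
          + ∑ u2' : X, (if u2' = u2 then 0 else S (π u2) (π u2'))
              * (if u1' = u1 + u2 - u2' then 0 else S (u1 + u2) (u1' + u2')) := by
    intro u1 u1' u2
    set c : X := -u1' + (u1 + u2) with hc
    have hc' : u1' + c = u1 + u2 := add_neg_cancel_left u1' (u1 + u2)
    have hiff : ∀ u2' : X, u1' = u1 + u2 - u2' ↔ u2' = c := by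
      intro u2'
      rw [eq_sub_iff_add_eq, hc, eq_neg_add_iff_add_eq]
    have hpt : ∀ u2' : X, S (u1 + u2) (u1' + u2') * S (π u2) (π u2')
        ≤ (if u2' = u2 then S (u1 + u2) (u1' + u2) else 0)
          + (if u2' = c then S (π u2) (π c) else 0)
          + (if u2' = u2 then 0 else S (π u2) (π u2'))
              * (if u1' = u1 + u2 - u2' then 0 else S (u1 + u2) (u1' + u2')) := by
      intro u2'
      by_cases h1 : u2' = u2
      · rw [if_pos h1, if_pos h1, zero_mul, add_zero, h1]
        have h0 : (0:ℝ) ≤ if u2 = c then S (π u2) (π c) else 0 := by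
          split
          · exact hSnn _ _
          · exact le_rfl
        have h3 : S (u1 + u2) (u1' + u2) * S (π u2) (π u2) = S (u1 + u2) (u1' + u2) := by
          rw [hSd, mul_one]
        rw [h3]
        linarith
      · by_cases h2 : u2' = c
        · rw [if_neg h1, if_neg h1, if_pos h2, if_pos ((hiff u2').2 h2), mul_zero,
            add_zero, zero_add, h2]
          have h3 : S (u1 + u2) (u1' + c) * S (π u2) (π c) = S (π u2) (π c) := by
            rw [hc', hSd, one_mul]
          rw [h3]
        · rw [if_neg h1, if_neg h1, if_neg h2,
            if_neg (fun h => h2 ((hiff u2').1 h)), zero_add, zero_add]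
          exact le_of_eq (mul_comm _ _)
    calc (∑ u2' : X, S (u1 + u2) (u1' + u2') * S (π u2) (π u2'))
        ≤ ∑ u2' : X, ((if u2' = u2 then S (u1 + u2) (u1' + u2) else 0)
            + (if u2' = c then S (π u2) (π c) else 0)
            + (if u2' = u2 then 0 else S (π u2) (π u2'))
                * (if u1' = u1 + u2 - u2' then 0 else S (u1 + u2) (u1' + u2'))) :=
          Finset.sum_le_sum fun u2' _ => hpt u2'
      _ = S (u1 + u2) (u1' + u2) + S (π u2) (π c)
            + ∑ u2' : X, (if u2' = u2 then 0 else S (π u2) (π u2'))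
                * (if u1' = u1 + u2 - u2' then 0 else S (u1 + u2) (u1' + u2')) := by
          rw [Finset.sum_add_distrib, Finset.sum_add_distrib,
            Finset.sum_ite_eq' univ u2 (fun _ => S (u1 + u2) (u1' + u2)),
            Finset.sum_ite_eq' univ c (fun _ => S (π u2) (π c)),
            if_pos (mem_univ u2), if_pos (mem_univ c)]
  -- piece 1 of bound 2
  have hP1 : (∑ u1 : X, ∑ u1' ∈ univ.filter (· ≠ u1), ∑ u2 : X,
      S (u1 + u2) (u1' + u2)) = q * (E - q) := by
    have h1 : ∀ u1 : X, (∑ u1' ∈ univ.filter (· ≠ u1), ∑ u2 : X, S (u1 + u2) (u1' + u2))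
        = E - q := by
      intro u1
      rw [Finset.filter_ne', Finset.sum_erase_eq_sub (mem_univ u1)]
      have e1 : (∑ u1' : X, ∑ u2 : X, S (u1 + u2) (u1' + u2)) = E := by
        rw [Finset.sum_comm]
        calc (∑ u2 : X, ∑ u1' : X, S (u1 + u2) (u1' + u2))
            = ∑ u2 : X, ∑ b : X, S (u1 + u2) b :=
              Finset.sum_congr rfl fun u2 _ => hRowR (u1 + u2) u2
          _ = E := hRleft u1
      have e2 : (∑ u2 : X, S (u1 + u2) (u1 + u2)) = q := by
        rw [Finset.sum_congr rfl fun u2 _ => hSd (u1 + u2)]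
        exact hcard
      rw [e1, e2]
    rw [Finset.sum_congr rfl fun u1 _ => h1 u1, Finset.sum_const, Finset.card_univ,
      nsmul_eq_mul, hqdef]
  -- piece 3 of bound 2
  have hP3 : (∑ u1 : X, ∑ u1' ∈ univ.filter (· ≠ u1), ∑ u2 : X, ∑ u2' : X,
      (if u2' = u2 then 0 else S (π u2) (π u2'))
        * (if u1' = u1 + u2 - u2' then 0 else S (u1 + u2) (u1' + u2')))
      ≤ (E - q) * (E - q) := by
    have hHnn : ∀ u1 u1' u2 u2' : X, 0 ≤ (if u2' = u2 then 0 else S (π u2) (π u2'))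
        * (if u1' = u1 + u2 - u2' then 0 else S (u1 + u2) (u1' + u2')) := by
      intro u1 u1' u2 u2'
      apply mul_nonneg
      · split
        · exact le_rfl
        · exact hSnn _ _
      · split
        · exact le_rfl
        · exact hSnn _ _
    have hfull : (∑ u1 : X, ∑ u1' ∈ univ.filter (· ≠ u1), ∑ u2 : X, ∑ u2' : X,
        (if u2' = u2 then 0 else S (π u2) (π u2'))
          * (if u1' = u1 + u2 - u2' then 0 else S (u1 + u2) (u1' + u2')))
        ≤ ∑ u1 : X, ∑ u1' : X, ∑ u2 : X, ∑ u2' : X,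
            (if u2' = u2 then 0 else S (π u2) (π u2'))
              * (if u1' = u1 + u2 - u2' then 0 else S (u1 + u2) (u1' + u2')) := by
      refine Finset.sum_le_sum fun u1 _ => ?_
      refine Finset.sum_le_sum_of_subset_of_nonneg (Finset.filter_subset _ _) ?_
      intro u1' _ _
      exact Finset.sum_nonneg fun u2 _ => Finset.sum_nonneg fun u2' _ =>
        hHnn u1 u1' u2 u2'
    refine hfull.trans (le_of_eq ?_)
    have hinner : ∀ u1 u2 u2' : X,
        (∑ u1' : X, (if u1' = u1 + u2 - u2' then 0 else S (u1 + u2) (u1' + u2')))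
          = (∑ b : X, S (u1 + u2) b) - 1 := by
      intro u1 u2 u2'
      rw [hif (u1 + u2 - u2') (fun u1' => S (u1 + u2) (u1' + u2')), hRowR,
        sub_add_cancel, hSd]
    have hinner2 : ∀ u2 u2' : X,
        (∑ u1 : X, ∑ u1' : X,
          (if u1' = u1 + u2 - u2' then 0 else S (u1 + u2) (u1' + u2'))) = E - q := by
      intro u2 u2'
      rw [Finset.sum_congr rfl fun u1 _ => hinner u1 u2 u2', Finset.sum_sub_distrib,
        hRright u2, hcard]
    have hc1 : (∑ u2 : X, ∑ u2' : X, (if u2' = u2 then 0 else S (π u2) (π u2')))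
        = E - q := by
      have h1 : ∀ u2 : X, (∑ u2' : X, (if u2' = u2 then 0 else S (π u2) (π u2')))
          = (∑ b : X, S (π u2) b) - 1 := by
        intro u2
        rw [hif u2 (fun u2' => S (π u2) (π u2')), hpiRow (π u2), hSd]
      rw [Finset.sum_congr rfl fun u2 _ => h1 u2, Finset.sum_sub_distrib, hpiCol, hcard]
    calc (∑ u1 : X, ∑ u1' : X, ∑ u2 : X, ∑ u2' : X,
        (if u2' = u2 then 0 else S (π u2) (π u2'))
          * (if u1' = u1 + u2 - u2' then 0 else S (u1 + u2) (u1' + u2')))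
        = ∑ u2 : X, ∑ u2' : X, ∑ u1 : X, ∑ u1' : X,
            (if u2' = u2 then 0 else S (π u2) (π u2'))
              * (if u1' = u1 + u2 - u2' then 0 else S (u1 + u2) (u1' + u2')) :=
          sum4_comm (fun u1 u1' u2 u2' =>
            (if u2' = u2 then 0 else S (π u2) (π u2'))
              * (if u1' = u1 + u2 - u2' then 0 else S (u1 + u2) (u1' + u2')))
      _ = ∑ u2 : X, ∑ u2' : X, (if u2' = u2 then 0 else S (π u2) (π u2')) * (E - q) := by
          refine Finset.sum_congr rfl fun u2 _ => Finset.sum_congr rfl fun u2' _ => ?_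
          rw [mul_sum2, hinner2 u2 u2']
      _ = (E - q) * (E - q) := by
          calc (∑ u2 : X, ∑ u2' : X, (if u2' = u2 then 0 else S (π u2) (π u2')) * (E - q))
              = (∑ u2 : X, ∑ u2' : X, (if u2' = u2 then 0 else S (π u2) (π u2')))
                  * (E - q) := by
                rw [Finset.sum_mul]
                exact Finset.sum_congr rfl fun u2 _ => (Finset.sum_mul _ _ _).symm
            _ = (E - q) * (E - q) := by rw [hc1]
  -- bound 2 assembled
  have hM2 : M ≤ 2 * q * (E - q) + (E - q) * (E - q) := by
    have h1 : M ≤ ∑ u1 : X, ∑ u1' ∈ univ.filter (· ≠ u1), ∑ u2 : X,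
        (S (u1 + u2) (u1' + u2) + S (π u2) (π (-u1' + (u1 + u2)))
          + ∑ u2' : X, (if u2' = u2 then 0 else S (π u2) (π u2'))
              * (if u1' = u1 + u2 - u2' then 0 else S (u1 + u2) (u1' + u2'))) := by
      rw [hM]
      exact Finset.sum_le_sum fun u1 _ => Finset.sum_le_sum fun u1' _ =>
        Finset.sum_le_sum fun u2 _ => key2 u1 u1' u2
    have h2 : (∑ u1 : X, ∑ u1' ∈ univ.filter (· ≠ u1), ∑ u2 : X,
        (S (u1 + u2) (u1' + u2) + S (π u2) (π (-u1' + (u1 + u2)))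
          + ∑ u2' : X, (if u2' = u2 then 0 else S (π u2) (π u2'))
              * (if u1' = u1 + u2 - u2' then 0 else S (u1 + u2) (u1' + u2'))))
        = (∑ u1 : X, ∑ u1' ∈ univ.filter (· ≠ u1), ∑ u2 : X, S (u1 + u2) (u1' + u2))
          + (∑ u1 : X, ∑ u1' ∈ univ.filter (· ≠ u1), ∑ u2 : X,
              S (π u2) (π (-u1' + (u1 + u2))))
          + ∑ u1 : X, ∑ u1' ∈ univ.filter (· ≠ u1), ∑ u2 : X, ∑ u2' : X,
              (if u2' = u2 then 0 else S (π u2) (π u2'))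
                * (if u1' = u1 + u2 - u2' then 0 else S (u1 + u2) (u1' + u2')) := by
      simp only [Finset.sum_add_distrib]
    rw [h2] at h1
    rw [hP1, hA] at h1
    have := h1.trans (add_le_add (le_refl _) hP3)
    calc M ≤ q * (E - q) + q * (E - q) + (E - q) * (E - q) := this
      _ = 2 * q * (E - q) + (E - q) * (E - q) := by ring
  -- conclusion
  have hqne : q ≠ 0 := ne_of_gt hq0
  have hq1ne : q - 1 ≠ 0 := ne_of_gt hq1
  rw [le_min_iff]
  constructor
  · refine hZWpiM.trans ?_
    have hmono : (q * (q - 1))⁻¹ * (q⁻¹ * M)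
        ≤ (q * (q - 1))⁻¹ * (q⁻¹ * (q ^ 2 * (E - q))) :=
      mul_le_mul_of_nonneg_left (mul_le_mul_of_nonneg_left hM1 (by positivity))
        (by positivity)
    refine hmono.trans (le_of_eq ?_)
    rw [hZavgW]
    field_simp
  · refine hZWpiM.trans ?_
    have hmono : (q * (q - 1))⁻¹ * (q⁻¹ * M)
        ≤ (q * (q - 1))⁻¹ * (q⁻¹ * (2 * q * (E - q) + (E - q) * (E - q))) :=
      mul_le_mul_of_nonneg_left (mul_le_mul_of_nonneg_left hM2 (by positivity))
        (by positivity)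
    refine hmono.trans (le_of_eq ?_)
    rw [hZavgW]
    field_simp
end

section
/- For any permutation π of X, Z(W^(π)) ≥ Z(W), where W^(π)(y₁,y₂ | u₁) = (1/q) Σ_{u₂} W(y₁ | u₁+u₂) W(y₂ | π(u₂)). -/
open Finset

/-- Cauchy–Schwarz for square roots. -/
lemma cs_sqrt {ι : Type*} (s : Finset ι) (f g : ι → ℝ) (hf : ∀ i ∈ s, 0 ≤ f i)
    (hg : ∀ i ∈ s, 0 ≤ g i) :
    ∑ i ∈ s, Real.sqrt (f i * g i) ≤ Real.sqrt ((∑ i ∈ s, f i) * (∑ i ∈ s, g i)) := by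
  have h1 : ∑ i ∈ s, Real.sqrt (f i * g i)
      = ∑ i ∈ s, Real.sqrt (f i) * Real.sqrt (g i) :=
    Finset.sum_congr rfl fun i hi => Real.sqrt_mul (hf i hi) _
  rw [h1, Real.le_sqrt (Finset.sum_nonneg fun i _ =>
      mul_nonneg (Real.sqrt_nonneg _) (Real.sqrt_nonneg _))
    (mul_nonneg (Finset.sum_nonneg hf) (Finset.sum_nonneg hg))]
  calc (∑ i ∈ s, Real.sqrt (f i) * Real.sqrt (g i)) ^ 2
      ≤ (∑ i ∈ s, Real.sqrt (f i) ^ 2) * ∑ i ∈ s, Real.sqrt (g i) ^ 2 :=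
        Finset.sum_mul_sq_le_sq_mul_sq s _ _
    _ = (∑ i ∈ s, f i) * (∑ i ∈ s, g i) := by
        rw [Finset.sum_congr rfl fun i hi => Real.sq_sqrt (hf i hi),
            Finset.sum_congr rfl fun i hi => Real.sq_sqrt (hg i hi)]

/-- `Z(W^(π)) ≥ Z(W)` for every permutation `π`. -/
theorem Zavg_le_Zavg_Wpi {X Y : Type*} [Fintype X] [DecidableEq X] [AddGroup X] [Fintype Y]
    (W : X → Y → ℝ) (hq : 2 ≤ Fintype.card X)
    (hnn : ∀ x y, 0 ≤ W x y) (hsum : ∀ x, ∑ y, W x y = 1) (π : Equiv.Perm X) :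
    Zavg W ≤ Zavg (Wpi W π) := by
  set q : ℝ := (Fintype.card X : ℝ) with hqdef
  have hq2 : (2 : ℝ) ≤ q := by rw [hqdef]; exact_mod_cast hq
  have hq0 : (0 : ℝ) < q := by linarith
  have hqinv : (0 : ℝ) ≤ q⁻¹ := inv_nonneg.2 hq0.le
  set F : X → X → ℝ := fun b b' => ∑ y, Real.sqrt (W b y * W b' y) with hF
  -- key pointwise bound
  have key : ∀ a a' : X,
      q⁻¹ * ∑ u2, F (a + u2) (a' + u2)
        ≤ ∑ p : Y × Y, Real.sqrt (Wpi W π a p * Wpi W π a' p) := by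
    intro a a'
    rw [Fintype.sum_prod_type]
    have step1 : ∀ y1 y2,
        q⁻¹ * ∑ u2, Real.sqrt (W (a + u2) y1 * W (a' + u2) y1) * W (π u2) y2
          ≤ Real.sqrt (Wpi W π a (y1, y2) * Wpi W π a' (y1, y2)) := by
      intro y1 y2
      have heq : Wpi W π a (y1, y2) * Wpi W π a' (y1, y2)
          = (q⁻¹) ^ 2 * ((∑ u2, W (a + u2) y1 * W (π u2) y2)
              * (∑ u2, W (a' + u2) y1 * W (π u2) y2)) := by
        simp only [Wpi]; ring
      rw [heq, Real.sqrt_mul (sq_nonneg _), Real.sqrt_sq hqinv]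
      refine mul_le_mul_of_nonneg_left ?_ hqinv
      have hcs := cs_sqrt univ (fun u2 => W (a + u2) y1 * W (π u2) y2)
        (fun u2 => W (a' + u2) y1 * W (π u2) y2)
        (fun u2 _ => mul_nonneg (hnn _ _) (hnn _ _))
        (fun u2 _ => mul_nonneg (hnn _ _) (hnn _ _))
      refine le_trans (le_of_eq ?_) hcs
      refine Finset.sum_congr rfl fun u2 _ => ?_
      have : W (a + u2) y1 * W (π u2) y2 * (W (a' + u2) y1 * W (π u2) y2)
          = (W (a + u2) y1 * W (a' + u2) y1) * (W (π u2) y2) ^ 2 := by ring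
      rw [this, Real.sqrt_mul (mul_nonneg (hnn _ _) (hnn _ _)), Real.sqrt_sq (hnn _ _)]
    calc q⁻¹ * ∑ u2, F (a + u2) (a' + u2)
        = ∑ y1, ∑ y2, q⁻¹ * ∑ u2,
            Real.sqrt (W (a + u2) y1 * W (a' + u2) y1) * W (π u2) y2 := by
          simp only [← Finset.mul_sum]
          congr 1
          rw [Finset.sum_comm]
          refine Finset.sum_congr rfl fun u2 _ => ?_
          rw [Finset.sum_comm]
          simp only [← Finset.mul_sum, hsum, mul_one, hF]
      _ ≤ ∑ y1, ∑ y2, Real.sqrt (Wpi W π a (y1, y2) * Wpi W π a' (y1, y2)) := by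
          refine Finset.sum_le_sum fun y1 _ => Finset.sum_le_sum fun y2 _ => step1 y1 y2
  -- reindexing
  have reindex : ∀ u2 : X,
      (∑ a, ∑ a' ∈ univ.filter (· ≠ a), F (a + u2) (a' + u2))
        = ∑ a, ∑ a' ∈ univ.filter (· ≠ a), F a a' := by
    intro u2
    have h1 : ∀ b : X, (univ.filter (· ≠ b)) = univ.erase b := by
      intro b; exact Finset.filter_ne' univ b
    simp only [h1, Finset.sum_erase_eq_sub (Finset.mem_univ _)]
    have h2 : ∀ a : X, ∑ a', F (a + u2) (a' + u2) = ∑ b', F (a + u2) b' := by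
      intro a
      exact Fintype.sum_equiv (Equiv.addRight u2) _ _ (fun a' => rfl)
    simp only [h2]
    exact Fintype.sum_equiv (Equiv.addRight u2) _ _ (fun a => rfl)
  -- combine
  unfold Zavg
  refine mul_le_mul_of_nonneg_left ?_ (inv_nonneg.2 (mul_nonneg hq0.le (by linarith)))
  calc (∑ a, ∑ a' ∈ univ.filter (· ≠ a), ∑ y, Real.sqrt (W a y * W a' y))
      = q⁻¹ * ∑ u2 : X, ∑ a, ∑ a' ∈ univ.filter (· ≠ a), F (a + u2) (a' + u2) := by
        simp only [reindex, Finset.sum_const, Finset.card_univ, nsmul_eq_mul, ← hqdef]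
        rw [← mul_assoc, inv_mul_cancel₀ (ne_of_gt hq0), one_mul]
    _ = ∑ a, ∑ a' ∈ univ.filter (· ≠ a), q⁻¹ * ∑ u2, F (a + u2) (a' + u2) := by
        simp only [← Finset.mul_sum]
        congr 1
        rw [Finset.sum_comm]
        exact Finset.sum_congr rfl fun a _ => Finset.sum_comm
    _ ≤ ∑ a, ∑ a' ∈ univ.filter (· ≠ a), ∑ p : Y × Y,
          Real.sqrt (Wpi W π a p * Wpi W π a' p) := by
        refine Finset.sum_le_sum fun a _ => Finset.sum_le_sum fun a' _ => key a a'
end
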